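/- arXiv:1003.3149 — 5 statements merged into one kernel-verified Lean document; each statement's English description precedes it below -/
import Mathlib

section
/- Every Ξ-algebra B is either of the first kind or of the second kind; that is, either C₀(Ξ) ⊆ B or B ∩ C₀(Ξ) = {0}. -/
open Filter Topology

section Aux

variable {E : Type*} [NormedAddCommGroup E] [NormedSpace ℝ E] [ProperSpace E]

theorem trans_cocompact (c : E) :
    Tendsto (fun Y : E => Y + c) (cocompact E) (cocompact E) := by
  rw [← Metric.cobounded_eq_cocompact, ← tendsto_norm_atTop_iff_cobounded]
  have h1 : Tendsto (fun Y : E => ‖Y‖ - ‖c‖) (Bornology.cobounded E) atTop :=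
    tendsto_norm_cobounded_atTop.atTop_add tendsto_const_nhds
  refine tendsto_atTop_mono (fun Y => ?_) h1
  have h2 : ‖Y‖ ≤ ‖Y + c‖ + ‖c‖ := by
    have := norm_add_le (Y + c) (-c); simpa using this
  linarith

theorem seq_cocompact (w p : E) (hp : p ≠ 0) :
    Tendsto (fun k : ℕ => w + (k : ℝ) • p) atTop (cocompact E) := by
  rw [← Metric.cobounded_eq_cocompact, ← tendsto_norm_atTop_iff_cobounded]
  have h1 : Tendsto (fun k : ℕ => (k : ℝ) * ‖p‖ - ‖w‖) atTop atTop := by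
    apply Tendsto.atTop_add _ tendsto_const_nhds
    exact Tendsto.atTop_mul_const (norm_pos_iff.mpr hp) tendsto_natCast_atTop_atTop
  refine tendsto_atTop_mono (fun k => ?_) h1
  have h2 : ‖(k : ℝ) • p‖ ≤ ‖w + (k : ℝ) • p‖ + ‖w‖ := by
    have := norm_add_le (w + (k : ℝ) • p) (-w); simpa using this
  have h3 : ‖(k : ℝ) • p‖ = (k : ℝ) * ‖p‖ := by
    rw [norm_smul]; simp
  linarith

theorem periodic_zero (f : BoundedContinuousFunction E ℂ)
    (hZ : Tendsto (f : E → ℂ) (cocompact E) (𝓝 0))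
    (x y : E) (hxy : x ≠ y) (h : ∀ z : E, f (x + z) = f (y + z)) : f = 0 := by
  set p := x - y with hp
  have hpne : p ≠ 0 := sub_ne_zero.mpr hxy
  have key : ∀ (w : E) (k : ℕ), f (w + (k : ℝ) • p) = f w := by
    intro w k
    induction k with
    | zero => simp
    | succ k ih =>
      have := h (w - y + (k : ℝ) • p)
      have e1 : x + (w - y + (k : ℝ) • p) = w + ((k : ℝ) + 1) • p := by
        rw [hp]; module
      have e2 : y + (w - y + (k : ℝ) • p) = w + (k : ℝ) • p := by abel
      rw [e1, e2] at this
      rw [Nat.cast_succ, this, ih]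
  ext w
  have h1 : Tendsto (fun k : ℕ => f (w + (k : ℝ) • p)) atTop (𝓝 0) :=
    hZ.comp (seq_cocompact w p hpne)
  have h2 : Tendsto (fun k : ℕ => f (w + (k : ℝ) • p)) atTop (𝓝 (f w)) := by
    simp only [key w]; exact tendsto_const_nhds
  have := tendsto_nhds_unique h2 h1
  simpa using this

open OnePoint in
noncomputable def extC (f : BoundedContinuousFunction E ℂ)
    (h : Tendsto (f : E → ℂ) (cocompact E) (𝓝 0)) : C(OnePoint E, ℂ) :=
  OnePoint.continuousMapMk f.toContinuousMap 0
    (by rw [Filter.coclosedCompact_eq_cocompact]; exact h)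

@[simp] theorem extC_coe (f : BoundedContinuousFunction E ℂ)
    (h : Tendsto (f : E → ℂ) (cocompact E) (𝓝 0)) (x : E) : extC f h x = f x := rfl

@[simp] theorem extC_infty (f : BoundedContinuousFunction E ℂ)
    (h : Tendsto (f : E → ℂ) (cocompact E) (𝓝 0)) : extC f h OnePoint.infty = 0 := rfl

noncomputable def Salg (B : NonUnitalStarSubalgebra ℂ (BoundedContinuousFunction E ℂ)) :
    StarSubalgebra ℂ C(OnePoint E, ℂ) where
  carrier := {F | ∃ f ∈ B, ∀ x : E, F x = f x + F OnePoint.infty}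
  add_mem' := by
    rintro F G ⟨f, hf, hF⟩ ⟨g, hg, hG⟩
    exact ⟨f + g, add_mem hf hg, fun x => by simp [hF x, hG x]; ring⟩
  zero_mem' := ⟨0, zero_mem _, fun x => by simp⟩
  one_mem' := ⟨0, zero_mem _, fun x => by simp⟩
  mul_mem' := by
    rintro F G ⟨f, hf, hF⟩ ⟨g, hg, hG⟩
    refine ⟨f * g + G OnePoint.infty • f + F OnePoint.infty • g,
      add_mem (add_mem (mul_mem hf hg) (SMulMemClass.smul_mem _ hf))
        (SMulMemClass.smul_mem _ hg), fun x => by simp [hF x, hG x]; ring⟩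
  algebraMap_mem' := fun c => ⟨0, zero_mem _, fun x => by simp⟩
  star_mem' := by
    rintro F ⟨f, hf, hF⟩
    exact ⟨star f, star_mem hf, fun x => by simp [hF x]⟩

theorem xi_aux (B : NonUnitalStarSubalgebra ℂ (BoundedContinuousFunction E ℂ))
    (hclosed : IsClosed (B : Set (BoundedContinuousFunction E ℂ)))
    (hinv : ∀ X : E, ∀ f ∈ B, ∃ g ∈ B, ∀ Y, g Y = f (Y + X)) :
    (∀ f : BoundedContinuousFunction E ℂ,
        Tendsto (f : E → ℂ) (cocompact E) (𝓝 0) → f ∈ B) ∨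
    (∀ f ∈ B, Tendsto (f : E → ℂ) (cocompact E) (𝓝 0) → f = 0) := by
  rw [or_iff_not_imp_right]
  intro h
  push_neg at h
  obtain ⟨f₀, hf₀B, hf₀Z, hf₀ne⟩ := h
  have htrans : ∀ c : E, ∃ g ∈ B, (∀ Y, g Y = f₀ (Y + c)) ∧
      Tendsto (g : E → ℂ) (cocompact E) (𝓝 0) := by
    intro c
    obtain ⟨g, hgB, hg⟩ := hinv c f₀ hf₀B
    refine ⟨g, hgB, hg, ?_⟩
    have h1 : Tendsto (fun Y : E => f₀ (Y + c)) (cocompact E) (𝓝 0) :=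
      hf₀Z.comp (trans_cocompact c)
    exact h1.congr fun Y => (hg Y).symm
  obtain ⟨x₀, hx₀⟩ : ∃ x₀ : E, f₀ x₀ ≠ 0 := by
    by_contra hc; push_neg at hc
    exact hf₀ne (BoundedContinuousFunction.ext fun w => by simp [hc w])
  have hnv : ∀ b : E, ∃ F : C(OnePoint E, ℂ), F ∈ Salg B ∧
      F (b : OnePoint E) ≠ 0 ∧ F OnePoint.infty = 0 := by
    intro b
    obtain ⟨g, hgB, hg, hgZ⟩ := htrans (x₀ - b)
    refine ⟨extC g hgZ, ⟨g, hgB, fun z => by simp⟩, ?_, rfl⟩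
    have : g b = f₀ x₀ := by rw [hg b]; congr 1; abel
    simpa [this] using hx₀
  have hsep : (Salg B).SeparatesPoints := by
    rintro x y hxy
    induction x using OnePoint.rec with
    | infty =>
      induction y using OnePoint.rec with
      | infty => exact absurd rfl hxy
      | coe b =>
        obtain ⟨F, hFS, hFb, hFi⟩ := hnv b
        exact ⟨⇑F, ⟨F, hFS, rfl⟩, by rw [hFi]; exact (Ne.symm hFb)⟩
    | coe a =>
      induction y using OnePoint.rec with
      | infty =>
        obtain ⟨F, hFS, hFb, hFi⟩ := hnv a
        exact ⟨⇑F, ⟨F, hFS, rfl⟩, by rw [hFi]; exact hFb⟩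
      | coe b =>
        by_contra hcon
        push_neg at hcon
        have hab : a ≠ b := by simpa [OnePoint.coe_eq_coe] using hxy
        refine hf₀ne (periodic_zero f₀ hf₀Z a b hab fun z => ?_)
        obtain ⟨g, hgB, hg, hgZ⟩ := htrans z
        have mem : ⇑(extC g hgZ) ∈
            (fun f : C(OnePoint E, ℂ) => ⇑f) '' ((Salg B : Set C(OnePoint E, ℂ))) :=
          ⟨extC g hgZ, ⟨g, hgB, fun w => by simp⟩, rfl⟩
        have := hcon _ mem
        simp only [extC_coe] at this
        rw [hg a, hg b] at this
        exact this
  have htop := ContinuousMap.starSubalgebra_topologicalClosure_eq_top_of_separatesPoints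
      (Salg B) hsep
  intro g hgZ
  have hG : extC g hgZ ∈ closure ((Salg B : Set C(OnePoint E, ℂ))) := by
    rw [← StarSubalgebra.topologicalClosure_coe, htop]
    simp
  rw [mem_closure_iff_seq_limit] at hG
  obtain ⟨u, hu_mem, hu_lim⟩ := hG
  choose fk hfkB hfk using hu_mem
  have hc : Tendsto (fun k => u k OnePoint.infty) atTop (𝓝 0) := by
    have h1 : Tendsto (fun k => u k OnePoint.infty) atTop
        (𝓝 (extC g hgZ OnePoint.infty)) :=
      ((continuous_eval_const OnePoint.infty).tendsto _).comp hu_lim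
    simpa using h1
  have hd : Tendsto (fun k => dist (u k) (extC g hgZ)) atTop (𝓝 0) :=
    tendsto_iff_dist_tendsto_zero.mp hu_lim
  have hbound : ∀ k, dist (fk k) g ≤ dist (u k) (extC g hgZ) + ‖u k OnePoint.infty‖ := by
    intro k
    rw [BoundedContinuousFunction.dist_le (add_nonneg dist_nonneg (norm_nonneg _))]
    intro x
    have e1 : fk k x - g x = (u k (x : OnePoint E) - extC g hgZ (x : OnePoint E))
        + (- u k OnePoint.infty) := by
      rw [hfk k x]; simp; ring
    calc dist (fk k x) (g x) = ‖fk k x - g x‖ := dist_eq_norm _ _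
      _ ≤ ‖u k (x : OnePoint E) - extC g hgZ (x : OnePoint E)‖ + ‖u k OnePoint.infty‖ := by
          rw [e1]
          refine (norm_add_le _ _).trans ?_
          simp
      _ ≤ dist (u k) (extC g hgZ) + ‖u k OnePoint.infty‖ := by
          gcongr
          rw [← dist_eq_norm]
          exact ContinuousMap.dist_apply_le_dist _
  have hsum : Tendsto (fun k => dist (u k) (extC g hgZ) + ‖u k OnePoint.infty‖)
      atTop (𝓝 0) := by
    have := hd.add (hc.norm)
    simpa using this
  have hfg : Tendsto fk atTop (𝓝 g) := by
    rw [tendsto_iff_dist_tendsto_zero]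
    exact squeeze_zero (fun k => dist_nonneg) hbound hsum
  exact hclosed.mem_of_tendsto hfg (Eventually.of_forall hfkB)

end Aux

/-- Every Ξ-algebra `B` (a closed star-subalgebra of the bounded
uniformly continuous functions on `Ξ = ℝ^{2n}`, invariant under all translations)
is either of the first kind (`C₀(Ξ) ⊆ B`) or of the second kind
(`B ∩ C₀(Ξ) = {0}`). -/
theorem xi_algebra_first_or_second_kind (n : ℕ)
    (B : NonUnitalStarSubalgebra ℂ
      (BoundedContinuousFunction (EuclideanSpace ℝ (Fin (2 * n))) ℂ))
    (hclosed : IsClosed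
      (B : Set (BoundedContinuousFunction (EuclideanSpace ℝ (Fin (2 * n))) ℂ)))
    (hunif : ∀ f ∈ B, UniformContinuous (f : EuclideanSpace ℝ (Fin (2 * n)) → ℂ))
    (hinv : ∀ X : EuclideanSpace ℝ (Fin (2 * n)), ∀ f ∈ B,
      ∃ g ∈ B, ∀ Y, g Y = f (Y + X)) :
    (∀ f : BoundedContinuousFunction (EuclideanSpace ℝ (Fin (2 * n))) ℂ,
        Tendsto (f : EuclideanSpace ℝ (Fin (2 * n)) → ℂ)
          (cocompact (EuclideanSpace ℝ (Fin (2 * n)))) (𝓝 0) → f ∈ B) ∨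
    (∀ f ∈ B,
        Tendsto (f : EuclideanSpace ℝ (Fin (2 * n)) → ℂ)
          (cocompact (EuclideanSpace ℝ (Fin (2 * n)))) (𝓝 0) → f = 0) := by
  exact xi_aux B hclosed hinv
end

section
/- Let B be a nonzero Ξ-algebra that is Ξ-simple, i.e. B contains no closed translation-invariant (two-sided) ideals other than {0} and B itself (equivalently, the Gelfand spectrum of B with its induced Ξ-action is a minimal dynamical system). Then either B = C₀(Ξ) or B is of the second kind, i.e. B ∩ C₀(Ξ) = {0}. -/
/-!
`B ∩ C₀(Ξ)` is a closed translation-invariant ideal of `B`, so by simplicity it is `0` or `B`.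
In the second case `B ⊆ C₀(Ξ)`. Translating a nonzero element shows that `B` vanishes nowhere,
and `B` separates points: if all of `B` agreed at `x` and `y`, every element would be periodic
with period `y - x`, which is impossible for a nonzero function vanishing at infinity. Hence
`ℂ + B`, seen on the one-point compactification, is a closed point-separating star subalgebra,
equal to everything by Stone–Weierstrass, and `B = C₀(Ξ)`.
-/

open Filter Topology BoundedContinuousFunction OnePoint

section VanishingAtInfinity

variable {X : Type*} [TopologicalSpace X]

theorem isClosed_setOf_tendsto_cocompact_zero {β : Type*} [PseudoMetricSpace β] [Zero β] :
    IsClosed {f : X →ᵇ β | Tendsto f (cocompact X) (𝓝 0)} := by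
  convert ZeroAtInftyContinuousMap.isClosed_range_toBCF (α := X) (β := β)
  exact Set.ext fun f =>
    ⟨fun hf => ⟨⟨f.toContinuousMap, hf⟩, rfl⟩, by rintro ⟨g, rfl⟩; exact zero_at_infty g⟩

theorem Filter.Tendsto.mul_boundedContinuousFunction {β : Type*} [NormedRing β] {l : Filter X}
    {g : X →ᵇ β} (hg : Tendsto g l (𝓝 0)) (f : X →ᵇ β) : Tendsto ⇑(g * f) l (𝓝 0) :=
  hg.zero_mul_isBoundedUnder_le ⟨‖f‖, eventually_map.2 (.of_forall f.norm_coe_le_norm)⟩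

end VanishingAtInfinity

section OnePointCompactification

variable {X : Type*} [TopologicalSpace X]

noncomputable def restrictSubInfty (h : C(OnePoint X, ℂ)) : X →ᵇ ℂ :=
  (mkOfCompact h).compContinuous ⟨(↑), OnePoint.continuous_coe⟩ - h ∞ • 1

@[simp]
theorem restrictSubInfty_apply (h : C(OnePoint X, ℂ)) (x : X) :
    restrictSubInfty h x = h x - h ∞ := by
  simp [restrictSubInfty]

theorem continuous_restrictSubInfty : Continuous (restrictSubInfty (X := X)) := by
  have hmk : Continuous (mkOfCompact : C(OnePoint X, ℂ) → OnePoint X →ᵇ ℂ) :=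
    (ContinuousMap.isometryEquivBoundedOfCompact _ _).continuous
  unfold restrictSubInfty
  exact ((continuous_compContinuous _).comp hmk).sub
    ((continuous_eval_const (F := C(OnePoint X, ℂ)) ∞).smul continuous_const)

theorem restrictSubInfty_add (h₁ h₂ : C(OnePoint X, ℂ)) :
    restrictSubInfty (h₁ + h₂) = restrictSubInfty h₁ + restrictSubInfty h₂ := by
  ext x
  simp only [restrictSubInfty_apply, ContinuousMap.add_apply, coe_add, Pi.add_apply]
  ring

theorem restrictSubInfty_mul (h₁ h₂ : C(OnePoint X, ℂ)) :
    restrictSubInfty (h₁ * h₂) = restrictSubInfty h₁ * restrictSubInfty h₂ +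
      h₁ ∞ • restrictSubInfty h₂ + h₂ ∞ • restrictSubInfty h₁ := by
  ext x
  simp only [restrictSubInfty_apply, ContinuousMap.mul_apply, coe_add, coe_mul, coe_smul,
    Pi.add_apply, Pi.mul_apply, smul_eq_mul]
  ring

/-- The functions `c + f` on `OnePoint X` with `c ∈ ℂ` and `f ∈ B` extended by `0` at `∞`. -/
def onePointUnitization (B : NonUnitalStarSubalgebra ℂ (X →ᵇ ℂ)) :
    StarSubalgebra ℂ C(OnePoint X, ℂ) where
  carrier := {h | restrictSubInfty h ∈ B}
  add_mem' {h₁ h₂} m₁ m₂ := by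
    show restrictSubInfty _ ∈ B
    rw [restrictSubInfty_add]
    exact add_mem m₁ m₂
  mul_mem' {h₁ h₂} m₁ m₂ := by
    show restrictSubInfty _ ∈ B
    rw [restrictSubInfty_mul]
    exact add_mem (add_mem (mul_mem m₁ m₂) (SMulMemClass.smul_mem _ m₂))
      (SMulMemClass.smul_mem _ m₁)
  algebraMap_mem' c := by
    have : restrictSubInfty (algebraMap ℂ C(OnePoint X, ℂ) c) = 0 := by ext x; simp
    show restrictSubInfty _ ∈ B
    rw [this]
    exact zero_mem B
  star_mem' {h} m := by
    have : restrictSubInfty (star h) = star (restrictSubInfty h) := by ext x; simp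
    show restrictSubInfty _ ∈ B
    rw [this]
    exact star_mem m

theorem isClosed_onePointUnitization {B : NonUnitalStarSubalgebra ℂ (X →ᵇ ℂ)}
    (hB : IsClosed (B : Set (X →ᵇ ℂ))) :
    IsClosed (onePointUnitization B : Set C(OnePoint X, ℂ)) :=
  hB.preimage continuous_restrictSubInfty

variable [T2Space X]

noncomputable def extendByZero (f : X →ᵇ ℂ) (hf : Tendsto f (cocompact X) (𝓝 0)) :
    C(OnePoint X, ℂ) :=
  continuousMapMk f.toContinuousMap 0 (by rwa [coclosedCompact_eq_cocompact])

@[simp]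
theorem extendByZero_coe (f : X →ᵇ ℂ) (hf : Tendsto f (cocompact X) (𝓝 0)) (x : X) :
    extendByZero f hf x = f x := rfl

@[simp]
theorem extendByZero_infty (f : X →ᵇ ℂ) (hf : Tendsto f (cocompact X) (𝓝 0)) :
    extendByZero f hf ∞ = 0 := rfl

@[simp]
theorem restrictSubInfty_extendByZero (f : X →ᵇ ℂ) (hf : Tendsto f (cocompact X) (𝓝 0)) :
    restrictSubInfty (extendByZero f hf) = f := by
  ext x
  simp

theorem separatesPoints_onePointUnitization {B : NonUnitalStarSubalgebra ℂ (X →ᵇ ℂ)}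
    (hB0 : ∀ f ∈ B, Tendsto f (cocompact X) (𝓝 0))
    (hsep : ∀ x y : X, x ≠ y → ∃ f ∈ B, f x ≠ f y) (hne : ∀ x : X, ∃ f ∈ B, f x ≠ 0) :
    (onePointUnitization B).SeparatesPoints := by
  intro x y hxy
  suffices ∃ f, ∃ hf : f ∈ B, extendByZero f (hB0 f hf) x ≠ extendByZero f (hB0 f hf) y by
    obtain ⟨f, hf, hfxy⟩ := this
    refine ⟨_, ⟨extendByZero f (hB0 f hf), ?_, rfl⟩, hfxy⟩
    simpa [onePointUnitization] using hf
  induction x using OnePoint.rec <;> induction y using OnePoint.rec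
  · exact absurd rfl hxy
  · obtain ⟨f, hf, hfy⟩ := hne _
    exact ⟨f, hf, by simpa using hfy.symm⟩
  · obtain ⟨f, hf, hfx⟩ := hne _
    exact ⟨f, hf, by simpa using hfx⟩
  · obtain ⟨f, hf, hfxy⟩ := hsep _ _ fun h => hxy (congrArg _ h)
    exact ⟨f, hf, by simpa using hfxy⟩

/-- Stone–Weierstrass for functions vanishing at infinity, via `onePointUnitization`. -/
theorem mem_of_tendsto_cocompact_zero {B : NonUnitalStarSubalgebra ℂ (X →ᵇ ℂ)}
    (hB : IsClosed (B : Set (X →ᵇ ℂ))) (hB0 : ∀ f ∈ B, Tendsto f (cocompact X) (𝓝 0))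
    (hsep : ∀ x y : X, x ≠ y → ∃ f ∈ B, f x ≠ f y) (hne : ∀ x : X, ∃ f ∈ B, f x ≠ 0)
    {f : X →ᵇ ℂ} (hf : Tendsto f (cocompact X) (𝓝 0)) : f ∈ B := by
  have hdense := ContinuousMap.starSubalgebra_topologicalClosure_eq_top_of_separatesPoints _
    (separatesPoints_onePointUnitization hB0 hsep hne)
  have : extendByZero f hf ∈ (onePointUnitization B).topologicalClosure := hdense ▸ trivial
  rw [← SetLike.mem_coe, StarSubalgebra.topologicalClosure_coe,
    (isClosed_onePointUnitization hB).closure_eq] at this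
  simpa [onePointUnitization] using this

end OnePointCompactification

section TranslationInvariance

variable {E : Type*}

def IsTranslationInvariant [TopologicalSpace E] [Add E] (S : Set (E →ᵇ ℂ)) : Prop :=
  ∀ X : E, ∀ f ∈ S, ∃ g ∈ S, ∀ Y, g Y = f (Y + X)

theorem IsTranslationInvariant.inter_setOf_tendsto_cocompact_zero [TopologicalSpace E]
    [AddGroup E] [ContinuousAdd E] {S : Set (E →ᵇ ℂ)} (hS : IsTranslationInvariant S) :
    IsTranslationInvariant (S ∩ {f | Tendsto f (cocompact E) (𝓝 0)}) := by
  rintro X f ⟨hfS, hf⟩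
  obtain ⟨g, hgS, hg⟩ := hS X f hfS
  refine ⟨g, ⟨hgS, ?_⟩, hg⟩
  exact (hf.comp (Homeomorph.addRight X).isClosedEmbedding.tendsto_cocompact).congr
    fun Y => (hg Y).symm

theorem IsTranslationInvariant.exists_apply_ne_zero [TopologicalSpace E] [AddGroup E]
    {S : Set (E →ᵇ ℂ)} (hS : IsTranslationInvariant S) {f : E →ᵇ ℂ} (hfS : f ∈ S) (hf : f ≠ 0)
    (x : E) : ∃ g ∈ S, g x ≠ 0 := by
  obtain ⟨z, hz⟩ : ∃ z, f z ≠ 0 := by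
    by_contra! h
    exact hf (ext h)
  obtain ⟨g, hgS, hg⟩ := hS (-x + z) f hfS
  exact ⟨g, hgS, by rwa [hg, add_neg_cancel_left]⟩

theorem Function.Periodic.eq_of_tendsto_cocompact [NormedAddCommGroup E] [NormedSpace ℝ E]
    {β : Type*} [TopologicalSpace β] [T2Space β] {f : E → β} {d : E} (hf : Function.Periodic f d)
    (hd : d ≠ 0) {b : β} (hb : Tendsto f (cocompact E) (𝓝 b)) (z : E) : f z = b := by
  have hline : Tendsto (fun k : ℕ => z + (k : ℝ) • d) atTop (cocompact E) :=
    ((Homeomorph.addLeft z).isClosedEmbedding.tendsto_cocompact.comp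
      (isClosedEmbedding_smul_left hd).tendsto_cocompact).comp
      (tendsto_natCast_atTop_atTop.mono_right atTop_le_cocompact)
  refine tendsto_nhds_unique (tendsto_const_nhds.congr fun k => ?_) (hb.comp hline)
  simp [Nat.cast_smul_eq_nsmul, (hf.nsmul k) z]

theorem IsTranslationInvariant.exists_apply_ne_apply [NormedAddCommGroup E] [NormedSpace ℝ E]
    {S : Set (E →ᵇ ℂ)} (hS : IsTranslationInvariant S)
    (hS0 : ∀ f ∈ S, Tendsto f (cocompact E) (𝓝 0)) {f : E →ᵇ ℂ} (hfS : f ∈ S) (hf : f ≠ 0)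
    {x y : E} (hxy : x ≠ y) : ∃ g ∈ S, g x ≠ g y := by
  by_contra! hcon
  have hper : Function.Periodic f (y - x) := fun w => by
    obtain ⟨g, hgS, hg⟩ := hS (w - x) f hfS
    have := hcon g hgS
    rwa [hg, hg, add_sub_cancel, show y + (w - x) = w + (y - x) by abel, eq_comm] at this
  exact hf (ext fun z => hper.eq_of_tendsto_cocompact (sub_ne_zero.2 hxy.symm) (hS0 f hfS) z)

theorem IsTranslationInvariant.eq_setOf_tendsto_cocompact_zero [NormedAddCommGroup E]
    [NormedSpace ℝ E] {B : NonUnitalStarSubalgebra ℂ (E →ᵇ ℂ)} (hB : IsClosed (B : Set (E →ᵇ ℂ)))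
    (hinv : IsTranslationInvariant (B : Set (E →ᵇ ℂ)))
    (hB0 : ∀ f ∈ B, Tendsto f (cocompact E) (𝓝 0)) (hne : ∃ f ∈ B, f ≠ 0) :
    (B : Set (E →ᵇ ℂ)) = {f : E →ᵇ ℂ | Tendsto f (cocompact E) (𝓝 0)} := by
  obtain ⟨f, hfB, hf⟩ := hne
  exact subset_antisymm hB0 fun g hg => mem_of_tendsto_cocompact_zero hB hB0
    (fun x y hxy => hinv.exists_apply_ne_apply hB0 hfB hf hxy)
    (hinv.exists_apply_ne_zero hfB hf) hg

end TranslationInvariance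

theorem xi_simple_algebra_czero_or_second_kind_general (n : ℕ)
    (B : NonUnitalStarSubalgebra ℂ
      (BoundedContinuousFunction (EuclideanSpace ℝ (Fin (2 * n))) ℂ))
    (hclosed : IsClosed
      (B : Set (BoundedContinuousFunction (EuclideanSpace ℝ (Fin (2 * n))) ℂ)))
    (hinv : ∀ X : EuclideanSpace ℝ (Fin (2 * n)), ∀ f ∈ B,
      ∃ g ∈ B, ∀ Y, g Y = f (Y + X))
    (hnonzero : ∃ f ∈ B, f ≠ 0)
    (hsimple : ∀ J : Set (BoundedContinuousFunction (EuclideanSpace ℝ (Fin (2 * n))) ℂ),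
      J ⊆ B →
      IsClosed J →
      (0 : BoundedContinuousFunction (EuclideanSpace ℝ (Fin (2 * n))) ℂ) ∈ J →
      (∀ f ∈ J, ∀ g ∈ J, f + g ∈ J) →
      (∀ c : ℂ, ∀ f ∈ J, c • f ∈ J) →
      (∀ f ∈ J, star f ∈ J) →
      (∀ f ∈ B, ∀ g ∈ J, f * g ∈ J ∧ g * f ∈ J) →
      (∀ X : EuclideanSpace ℝ (Fin (2 * n)), ∀ f ∈ J,
        ∃ g ∈ J, ∀ Y, g Y = f (Y + X)) →
      J = {0} ∨ J = (B : Set (BoundedContinuousFunction (EuclideanSpace ℝ (Fin (2 * n))) ℂ))) :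
    ((B : Set (BoundedContinuousFunction (EuclideanSpace ℝ (Fin (2 * n))) ℂ)) =
      {f : BoundedContinuousFunction (EuclideanSpace ℝ (Fin (2 * n))) ℂ |
        Tendsto (f : EuclideanSpace ℝ (Fin (2 * n)) → ℂ)
        (cocompact (EuclideanSpace ℝ (Fin (2 * n)))) (𝓝 0)}) ∨
    (∀ f ∈ B,
      Tendsto (f : EuclideanSpace ℝ (Fin (2 * n)) → ℂ)
        (cocompact (EuclideanSpace ℝ (Fin (2 * n)))) (𝓝 0) → f = 0) := by
  rcases hsimple (B ∩ {f | Tendsto f (cocompact _) (𝓝 0)}) Set.inter_subset_left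
      (hclosed.inter isClosed_setOf_tendsto_cocompact_zero) ⟨zero_mem B, tendsto_const_nhds⟩
      (fun f hf g hg => ⟨add_mem hf.1 hg.1, by simpa [Pi.add_def] using hf.2.add hg.2⟩)
      (fun c f hf => ⟨SMulMemClass.smul_mem c hf.1, by simpa using hf.2.const_smul c⟩)
      (fun f hf => ⟨star_mem hf.1, by simpa [Pi.star_def] using hf.2.star⟩)
      (fun f hf g hg => ⟨⟨mul_mem hf hg.1, mul_comm g f ▸ hg.2.mul_boundedContinuousFunction f⟩,
        ⟨mul_mem hg.1 hf, hg.2.mul_boundedContinuousFunction f⟩⟩)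
      (IsTranslationInvariant.inter_setOf_tendsto_cocompact_zero hinv) with hJ | hJ
  · exact .inr fun f hf hf0 => hJ.subset ⟨hf, hf0⟩
  · exact .inl (IsTranslationInvariant.eq_setOf_tendsto_cocompact_zero hclosed hinv
      (Set.inter_eq_left.1 hJ) hnonzero)

/-- A nonzero Ξ-algebra `B` which is Ξ-simple (it contains no closed
translation-invariant two-sided (self-adjoint) ideal other than `{0}` and `B`)
is either equal to `C₀(Ξ)` or of the second kind (`B ∩ C₀(Ξ) = {0}`). -/
theorem xi_simple_algebra_czero_or_second_kind (n : ℕ)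
    (B : NonUnitalStarSubalgebra ℂ
      (BoundedContinuousFunction (EuclideanSpace ℝ (Fin (2 * n))) ℂ))
    (hclosed : IsClosed
      (B : Set (BoundedContinuousFunction (EuclideanSpace ℝ (Fin (2 * n))) ℂ)))
    (hunif : ∀ f ∈ B, UniformContinuous (f : EuclideanSpace ℝ (Fin (2 * n)) → ℂ))
    (hinv : ∀ X : EuclideanSpace ℝ (Fin (2 * n)), ∀ f ∈ B,
      ∃ g ∈ B, ∀ Y, g Y = f (Y + X))
    (hnonzero : ∃ f ∈ B, f ≠ 0)
    (hsimple : ∀ J : Set (BoundedContinuousFunction (EuclideanSpace ℝ (Fin (2 * n))) ℂ),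
      J ⊆ B →
      IsClosed J →
      (0 : BoundedContinuousFunction (EuclideanSpace ℝ (Fin (2 * n))) ℂ) ∈ J →
      (∀ f ∈ J, ∀ g ∈ J, f + g ∈ J) →
      (∀ c : ℂ, ∀ f ∈ J, c • f ∈ J) →
      (∀ f ∈ J, star f ∈ J) →
      (∀ f ∈ B, ∀ g ∈ J, f * g ∈ J ∧ g * f ∈ J) →
      (∀ X : EuclideanSpace ℝ (Fin (2 * n)), ∀ f ∈ J,
        ∃ g ∈ J, ∀ Y, g Y = f (Y + X)) →
      J = {0} ∨ J = (B : Set (BoundedContinuousFunction (EuclideanSpace ℝ (Fin (2 * n))) ℂ))) :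
    ((B : Set (BoundedContinuousFunction (EuclideanSpace ℝ (Fin (2 * n))) ℂ)) =
      {f : BoundedContinuousFunction (EuclideanSpace ℝ (Fin (2 * n))) ℂ |
        Tendsto (f : EuclideanSpace ℝ (Fin (2 * n)) → ℂ)
        (cocompact (EuclideanSpace ℝ (Fin (2 * n)))) (𝓝 0)}) ∨
    (∀ f ∈ B,
      Tendsto (f : EuclideanSpace ℝ (Fin (2 * n)) → ℂ)
        (cocompact (EuclideanSpace ℝ (Fin (2 * n)))) (𝓝 0) → f = 0) :=
  xi_simple_algebra_czero_or_second_kind_general n B hclosed hinv hnonzero hsimple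
end

section
/- Let Θ be a continuous action of Ξ = ℝ^{2n} on a locally compact Hausdorff space Σ and let σ ∈ Σ be of the first kind, i.e. every g ∈ C₀(Ξ) can be written as g = f ∘ Θ_σ for some f ∈ C₀(Σ). Let O := O_σ be the orbit of σ and E := E_σ its closure. Then O is an open subset of E, and O coincides with the set E^g of generic points of E. -/
open Filter Topology
open Metric

/-- If `σ₀` is of the first kind (every `g ∈ C₀(Ξ)` arises as
`f ∘ Θ_{σ₀}` for some `f ∈ C₀(Σ)`), then the orbit `O` of `σ₀` is open in the
quasi-orbit `E = closure O` and coincides with the set of generic points of `E`. -/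
theorem first_kind_orbit_open_eq_generic (n : ℕ) {Ω : Type*} [TopologicalSpace Ω]
    [T2Space Ω] [LocallyCompactSpace Ω]
    (Θ : EuclideanSpace ℝ (Fin (2 * n)) → Ω → Ω)
    (hcont : Continuous fun p : Ω × EuclideanSpace ℝ (Fin (2 * n)) => Θ p.2 p.1)
    (hzero : ∀ σ, Θ 0 σ = σ)
    (hadd : ∀ X Y σ, Θ X (Θ Y σ) = Θ (X + Y) σ)
    (σ₀ : Ω)
    -- `σ₀` is of the first kind
    (hfirst : ∀ g : ZeroAtInftyContinuousMap (EuclideanSpace ℝ (Fin (2 * n))) ℂ,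
      ∃ f : ZeroAtInftyContinuousMap Ω ℂ, ∀ X, g X = f (Θ X σ₀))
    (O : Set Ω) (hO : O = Set.range fun X => Θ X σ₀)
    (E : Set Ω) (hE : E = closure O) :
    -- `O` is open in the subspace topology of `E`
    IsOpen {x : E | (x : Ω) ∈ O} ∧
    -- `O` is the set of generic points of `E`
    O = {σ ∈ E | closure (Set.range fun X => Θ X σ) = E} := by
  subst hO hE
  set p : EuclideanSpace ℝ (Fin (2 * n)) → Ω := fun X => Θ X σ₀ with hp
  have pcont : Continuous p := by
    have : p = (fun q : Ω × EuclideanSpace ℝ (Fin (2 * n)) => Θ q.2 q.1) ∘ (fun X => (σ₀, X)) :=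
      rfl
    rw [this]; exact hcont.comp (continuous_const.prodMk continuous_id)
  have hΘc : ∀ X : EuclideanSpace ℝ (Fin (2 * n)), Continuous fun σ => Θ X σ := by
    intro X
    have : (fun σ => Θ X σ) =
        (fun q : Ω × EuclideanSpace ℝ (Fin (2 * n)) => Θ q.2 q.1) ∘ (fun σ => (σ, X)) := rfl
    rw [this]; exact hcont.comp (continuous_id.prodMk continuous_const)
  -- bump function
  set gfun : EuclideanSpace ℝ (Fin (2 * n)) → ℂ := fun X => ((1 - ‖X‖) ⊔ 0 : ℝ) with hg
  have gcont : Continuous gfun :=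
    Complex.continuous_ofReal.comp ((continuous_const.sub continuous_norm).max continuous_const)
  have gsupp : ∀ X : EuclideanSpace ℝ (Fin (2 * n)), 1 ≤ ‖X‖ → gfun X = 0 := by
    intro X hX
    simp only [hg]
    rw [max_eq_right (by linarith)]
    simp
  have gzero : Tendsto gfun (cocompact (EuclideanSpace ℝ (Fin (2 * n)))) (𝓝 0) := by
    apply tendsto_nhds_of_eventually_eq
    filter_upwards [(isCompact_closedBall (0 : EuclideanSpace ℝ (Fin (2 * n))) 1).compl_mem_cocompact]
      with X hX
    apply gsupp X
    simp only [Set.mem_compl_iff, mem_closedBall, dist_zero_right, not_le] at hX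
    exact hX.le
  obtain ⟨f, hf⟩ := hfirst ⟨⟨gfun, gcont⟩, gzero⟩
  have hf' : ∀ X, gfun X = f (Θ X σ₀) := hf
  have hf0 : f σ₀ = 1 := by
    have h := (hf' 0).symm
    rw [hzero σ₀] at h
    rw [h]
    simp [hg]
  -- key claim
  have key : ∀ σ ∈ closure (Set.range p),
      (∃ X, f (Θ X σ) ≠ 0) → σ ∈ Set.range p := by
    rintro σ hσ ⟨X, hX⟩
    rw [mem_closure_iff_ultrafilter] at hσ
    obtain ⟨u, hu_mem, hu_le⟩ := hσ
    have hne : (Filter.comap p ↑u).NeBot := by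
      apply Filter.comap_neBot
      intro t ht
      obtain ⟨x, hx1, Y, rfl⟩ := Ultrafilter.nonempty_of_mem (u.inter_mem ht hu_mem)
      exact ⟨Y, hx1⟩
    set V : Ultrafilter (EuclideanSpace ℝ (Fin (2 * n))) := Ultrafilter.of (Filter.comap p ↑u)
      with hV
    have hVle : (V : Filter _) ≤ Filter.comap p ↑u := Ultrafilter.of_le _
    have hpV : Tendsto p V (𝓝 σ) :=
      le_trans (Filter.map_mono hVle) (le_trans Filter.map_comap_le hu_le)
    have h1 : Tendsto (fun Y => Θ X (p Y)) V (𝓝 (Θ X σ)) := ((hΘc X).tendsto σ).comp hpV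
    have h2 : Tendsto (fun Y => f (Θ X (p Y))) V (𝓝 (f (Θ X σ))) :=
      (f.continuous.tendsto _).comp h1
    have h3 : ∀ Y, f (Θ X (p Y)) = gfun (X + Y) := by
      intro Y
      rw [hf' (X + Y)]
      simp only [hp, hadd]
    have h4 : Tendsto (fun Y => gfun (X + Y)) V (𝓝 (f (Θ X σ))) := h2.congr h3
    have h5 : ∀ᶠ Y in (V : Filter _), Y ∈ closedBall (-X) 1 := by
      filter_upwards [h4.eventually_ne hX] with Y hY
      rw [mem_closedBall, dist_eq_norm, sub_neg_eq_add]
      by_contra hc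
      exact hY (gsupp (X + Y) (by rw [add_comm]; exact (not_le.mp hc).le))
    have hK : (V : Filter _) ≤ 𝓟 (closedBall (-X) 1) := le_principal_iff.mpr h5
    obtain ⟨Y₀, _, hVY₀⟩ := (isCompact_closedBall (-X) 1).ultrafilter_le_nhds V hK
    have hpY₀ : Tendsto p V (𝓝 (p Y₀)) := (pcont.tendsto Y₀).mono_left hVY₀
    exact ⟨Y₀, tendsto_nhds_unique hpY₀ hpV⟩
  constructor
  · -- openness
    have hS : IsOpen {σ : Ω | ∃ X, f (Θ X σ) ≠ 0} := by
      have : {σ : Ω | ∃ X, f (Θ X σ) ≠ 0} =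
          ⋃ X, (fun σ => f (Θ X σ)) ⁻¹' ({0}ᶜ) := by
        ext σ; simp [Set.mem_iUnion]
      rw [this]
      exact isOpen_iUnion fun X => (isOpen_compl_singleton).preimage (f.continuous.comp (hΘc X))
    have heq : {x : (closure (Set.range p)) | (x : Ω) ∈ Set.range p} =
        Subtype.val ⁻¹' {σ : Ω | ∃ X, f (Θ X σ) ≠ 0} := by
      ext x
      simp only [Set.mem_setOf_eq, Set.mem_preimage]
      constructor
      · rintro ⟨Y, hY⟩
        refine ⟨-Y, ?_⟩
        rw [← hY]
        simp only [hp, hadd, neg_add_cancel, hzero, hf0]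
        exact one_ne_zero
      · exact fun h => key _ x.2 h
    rw [heq]
    exact hS.preimage continuous_subtype_val
  · -- generic points
    ext σ
    simp only [Set.mem_setOf_eq]
    constructor
    · rintro ⟨Y, rfl⟩
      refine ⟨subset_closure ⟨Y, rfl⟩, ?_⟩
      have hr : (Set.range fun X => Θ X (p Y)) = Set.range p := by
        have h1 : (fun X => Θ X (p Y)) = p ∘ (fun X => X + Y) := by
          funext X; simp only [hp, Function.comp_apply, hadd]
        rw [h1, Set.range_comp, Set.range_eq_univ.mpr (fun Z => ⟨Z - Y, by simp⟩),
          Set.image_univ]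
      rw [hr]
    · rintro ⟨hσE, hcl⟩
      have hσ₀ : σ₀ ∈ closure (Set.range fun X => Θ X σ) := by
        rw [hcl]
        exact subset_closure ⟨0, hzero σ₀⟩
      rw [_root_.mem_closure_iff] at hσ₀
      obtain ⟨ω, hωU, Y, rfl⟩ := hσ₀ (f ⁻¹' {0}ᶜ) (isOpen_compl_singleton.preimage f.continuous)
        (by simp [hf0])
      exact key σ hσE ⟨Y, by simpa using hωU⟩
end

section
/- Let Θ be a continuous action of Ξ = ℝ^{2n} on a locally compact Hausdorff space Σ and let σ ∈ Σ be of the first kind, i.e. every g ∈ C₀(Ξ) can be written as g = f ∘ Θ_σ for some f ∈ C₀(Σ). Let E := E_σ be the quasi-orbit generated by σ. Then for every f ∈ C₀(E), the function f ∘ Θ_σ belongs to C₀(Ξ) if and only if f vanishes identically on the set E^n := E \ E^g of non-generic points of E. -/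
/-!
For `f ∈ C₀(Y)` and any map `φ`, `f ∘ φ` tends to `0` along a filter exactly when `f` vanishes
at the cluster points of `φ` along it, because `f` is small off a compact set. So it suffices to
see that the non-generic points of `E` are the cluster points of the orbit map at infinity. A
point of `E` off the orbit is one, because images of compact sets are closed. Conversely, pick
`g ∈ C₀(Ξ)` with `g 0 ≠ 0` and, `σ₀` being of the first kind, `h ∈ C₀(Σ)` with
`g = h ∘ Θ_{σ₀}`: at a cluster point `τ` at infinity, `h (Θ_Y τ)` is a limit of values of
`g (Y + ·)` at infinity, so `h` vanishes on `E_τ` but not at `Θ_0 σ₀`, whence `E_τ ≠ E`.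
-/

open Filter Topology

open scoped ZeroAtInfty

theorem ZeroAtInftyContinuousMap.tendsto_comp_nhds_zero_iff {ι Y β : Type*}
    [TopologicalSpace Y] [TopologicalSpace β] [Zero β] [T2Space β]
    (f : C₀(Y, β)) (φ : ι → Y) (l : Filter ι) :
    Tendsto (fun i => f (φ i)) l (𝓝 0) ↔ ∀ y, MapClusterPt y l φ → f y = 0 := by
  refine ⟨fun hf y hy => eq_of_nhds_neBot ?_, fun hf => ?_⟩
  · exact (hy.continuousAt_comp f.continuous.continuousAt).clusterPt.mono hf
  rw [(nhds_basis_opens (0 : β)).tendsto_right_iff]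
  rintro U ⟨hU0, hU⟩
  by_contra hnot
  obtain ⟨K, hK, hKU⟩ := mem_cocompact'.mp (f.zero_at_infty' (hU.mem_nhds hU0))
  have hcpt : IsCompact (K ∩ {y | f y ∉ U}) :=
    hK.inter_right (hU.isClosed_compl.preimage f.continuous)
  obtain ⟨y, ⟨-, hyU⟩, hy⟩ := hcpt.exists_mapClusterPt_of_frequently
    ((not_eventually.mp hnot).mono fun i hi => ⟨hKU hi, hi⟩)
  exact hyU (hf y hy ▸ hU0)

theorem mapClusterPt_cocompact_of_mem_closure_range {X Y : Type*} [TopologicalSpace X]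
    [TopologicalSpace Y] [T2Space Y] {φ : X → Y} (hφ : Continuous φ) {y : Y}
    (hy : y ∈ closure (Set.range φ)) (hy' : y ∉ Set.range φ) :
    MapClusterPt y (cocompact X) φ := by
  rw [mapClusterPt_iff_frequently]
  intro s hs
  rw [hasBasis_cocompact.frequently_iff]
  intro K hK
  have hyK : y ∉ φ '' K := fun h => hy' (Set.image_subset_range _ _ h)
  have hnhds : s ∩ (φ '' K)ᶜ ∈ 𝓝 y :=
    inter_mem hs ((hK.image hφ).isClosed.isOpen_compl.mem_nhds hyK)
  obtain ⟨-, ⟨hs', hK'⟩, X, rfl⟩ := mem_closure_iff_nhds.mp hy _ hnhds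
  exact ⟨X, fun hX => hK' ⟨X, hX, rfl⟩, hs'⟩

theorem exists_zeroAtInftyContinuousMap_apply_ne_zero {X : Type*} [TopologicalSpace X]
    [RegularSpace X] [LocallyCompactSpace X] (x : X) : ∃ g : C₀(X, ℂ), g x ≠ 0 := by
  obtain ⟨f, hf1, -, hfc, -⟩ := exists_continuous_one_zero_of_isCompact isCompact_singleton
    isClosed_empty (Set.disjoint_empty {x})
  refine ⟨⟨⟨fun y => (f y : ℂ), by fun_prop⟩,
    (hfc.comp_left Complex.ofReal_zero).is_zero_at_infty⟩, ?_⟩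
  simp [hf1 rfl]

section Orbit

variable {Ξ Ω : Type*} {Θ : Ξ → Ω → Ω}

theorem range_orbit_apply_eq [AddGroup Ξ] (hadd : ∀ X Y σ, Θ X (Θ Y σ) = Θ (X + Y) σ)
    (σ : Ω) (X : Ξ) :
    Set.range (fun Y => Θ Y (Θ X σ)) = Set.range fun Y => Θ Y σ := by
  ext ω
  constructor
  · rintro ⟨Y, rfl⟩
    exact ⟨Y + X, (hadd Y X σ).symm⟩
  · rintro ⟨Z, rfl⟩
    exact ⟨Z + -X, by simp only [hadd, neg_add_cancel_right]⟩

theorem eqOn_zero_closure_orbit_of_mapClusterPt [TopologicalSpace Ξ] [AddGroup Ξ]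
    [SeparatelyContinuousAdd Ξ] [TopologicalSpace Ω] {β : Type*} [TopologicalSpace β] [Zero β]
    [T2Space β] (hadd : ∀ X Y σ, Θ X (Θ Y σ) = Θ (X + Y) σ) (hΘ : ∀ Y, Continuous (Θ Y))
    {σ₀ τ : Ω} (g : C₀(Ξ, β)) {h : Ω → β} (hh : Continuous h)
    (hgh : ∀ X, g X = h (Θ X σ₀)) (hτ : MapClusterPt τ (cocompact Ξ) fun X => Θ X σ₀) :
    Set.EqOn h 0 (closure (Set.range fun Y => Θ Y τ)) := by
  refine Set.EqOn.closure ?_ hh continuous_const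
  rintro - ⟨Y, rfl⟩
  have hcluster : MapClusterPt (h (Θ Y τ)) (cocompact Ξ) fun X => g (Y + X) := by
    simpa only [Function.comp_def, hgh, hadd] using
      hτ.continuousAt_comp (hh.comp (hΘ Y)).continuousAt
  have hlim : Tendsto (fun X => g (Y + X)) (cocompact Ξ) (𝓝 0) :=
    g.zero_at_infty'.comp (Homeomorph.addLeft Y).map_cocompact.le
  exact eq_of_nhds_neBot (hcluster.clusterPt.mono hlim)

theorem mapClusterPt_cocompact_iff_closure_orbit_ne [TopologicalSpace Ξ] [AddGroup Ξ]
    [SeparatelyContinuousAdd Ξ] [TopologicalSpace Ω] [T2Space Ω] {β : Type*} [TopologicalSpace β]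
    [Zero β] [T2Space β] (hcont : Continuous fun p : Ω × Ξ => Θ p.2 p.1)
    (hadd : ∀ X Y σ, Θ X (Θ Y σ) = Θ (X + Y) σ) {σ₀ σ : Ω} (g : C₀(Ξ, β)) (hg : g 0 ≠ 0)
    {h : Ω → β} (hh : Continuous h) (hgh : ∀ X, g X = h (Θ X σ₀))
    (hσ : σ ∈ closure (Set.range fun X => Θ X σ₀)) :
    MapClusterPt σ (cocompact Ξ) (fun X => Θ X σ₀) ↔
      closure (Set.range fun X => Θ X σ) ≠ closure (Set.range fun X => Θ X σ₀) := by
  constructor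
  · intro hσ' heq
    have hΘ : ∀ Y, Continuous (Θ Y) := fun Y => hcont.comp (continuous_id.prodMk continuous_const)
    have hvanish := eqOn_zero_closure_orbit_of_mapClusterPt hadd hΘ g hh hgh hσ'
    exact hg ((hgh 0).trans (hvanish (heq ▸ subset_closure (Set.mem_range_self 0))))
  · intro hne
    have horbit : Continuous fun X => Θ X σ₀ := hcont.comp (continuous_const.prodMk continuous_id)
    refine mapClusterPt_cocompact_of_mem_closure_range horbit hσ ?_
    rintro ⟨X, rfl⟩
    exact hne (by rw [range_orbit_apply_eq hadd])

end Orbit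

theorem first_kind_comp_zero_at_infty_iff_general (n : ℕ) {Ω : Type*} [TopologicalSpace Ω]
    [T2Space Ω]
    (Θ : EuclideanSpace ℝ (Fin (2 * n)) → Ω → Ω)
    (hcont : Continuous fun p : Ω × EuclideanSpace ℝ (Fin (2 * n)) => Θ p.2 p.1)
    (hadd : ∀ X Y σ, Θ X (Θ Y σ) = Θ (X + Y) σ)
    (σ₀ : Ω)
    -- `σ₀` is of the first kind
    (hfirst : ∀ g : ZeroAtInftyContinuousMap (EuclideanSpace ℝ (Fin (2 * n))) ℂ,
      ∃ h : ZeroAtInftyContinuousMap Ω ℂ, ∀ X, g X = h (Θ X σ₀))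
    (f : ZeroAtInftyContinuousMap (↥(closure (Set.range fun X => Θ X σ₀))) ℂ) :
    Tendsto (fun X : EuclideanSpace ℝ (Fin (2 * n)) =>
        f ⟨Θ X σ₀, subset_closure (Set.mem_range_self X)⟩)
      (cocompact (EuclideanSpace ℝ (Fin (2 * n)))) (𝓝 0) ↔
    ∀ σ (hσ : σ ∈ closure (Set.range fun X => Θ X σ₀)),
      closure (Set.range fun X => Θ X σ) ≠ closure (Set.range fun X => Θ X σ₀) →
      f ⟨σ, hσ⟩ = 0 := by
  obtain ⟨g, hg⟩ := exists_zeroAtInftyContinuousMap_apply_ne_zero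
    (0 : EuclideanSpace ℝ (Fin (2 * n)))
  obtain ⟨h, hgh⟩ := hfirst g
  rw [f.tendsto_comp_nhds_zero_iff, Subtype.forall]
  refine forall₂_congr fun σ hσ => ?_
  rw [← mapClusterPt_cocompact_iff_closure_orbit_ne hcont hadd g hg h.continuous hgh hσ]
  exact imp_congr_left Topology.IsInducing.subtypeVal.mapClusterPt_iff.symm

/-- Let `σ₀` be of the first kind and `E = E_{σ₀}` the quasi-orbit
it generates. For every `f ∈ C₀(E)`, the function `f ∘ Θ_{σ₀}` belongs to
`C₀(Ξ)` (i.e. vanishes at infinity) if and only if `f` vanishes identically on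
the set `Eⁿ = E \ E^g` of non-generic points of `E`. -/
theorem first_kind_comp_zero_at_infty_iff (n : ℕ) {Ω : Type*} [TopologicalSpace Ω]
    [T2Space Ω] [LocallyCompactSpace Ω]
    (Θ : EuclideanSpace ℝ (Fin (2 * n)) → Ω → Ω)
    (hcont : Continuous fun p : Ω × EuclideanSpace ℝ (Fin (2 * n)) => Θ p.2 p.1)
    (hzero : ∀ σ, Θ 0 σ = σ)
    (hadd : ∀ X Y σ, Θ X (Θ Y σ) = Θ (X + Y) σ)
    (σ₀ : Ω)
    -- `σ₀` is of the first kind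
    (hfirst : ∀ g : ZeroAtInftyContinuousMap (EuclideanSpace ℝ (Fin (2 * n))) ℂ,
      ∃ h : ZeroAtInftyContinuousMap Ω ℂ, ∀ X, g X = h (Θ X σ₀))
    (f : ZeroAtInftyContinuousMap (↥(closure (Set.range fun X => Θ X σ₀))) ℂ) :
    Tendsto (fun X : EuclideanSpace ℝ (Fin (2 * n)) =>
        f ⟨Θ X σ₀, subset_closure (Set.mem_range_self X)⟩)
      (cocompact (EuclideanSpace ℝ (Fin (2 * n)))) (𝓝 0) ↔
    ∀ σ (hσ : σ ∈ closure (Set.range fun X => Θ X σ₀)),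
      closure (Set.range fun X => Θ X σ) ≠ closure (Set.range fun X => Θ X σ₀) →
      f ⟨σ, hσ⟩ = 0 :=
  first_kind_comp_zero_at_infty_iff_general n Θ hcont hadd σ₀ hfirst f
end

section
/- Let I ⊆ ℝ be a compact interval, ℋ a complex Hilbert space, and (H^ℏ)_{ℏ∈I} a family of bounded self-adjoint operators on ℋ such that for every ζ ∈ ℂ with nonzero imaginary part the map ℏ ↦ ‖(H^ℏ − ζ·1)^{−1}‖ is continuous on I. Then the family of spectra {sp(H^ℏ)}_{ℏ∈I} is both outer continuous and inner continuous. -/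
/-!
For self-adjoint `H` with (real) spectrum `σ` and `x : ℝ`, the continuous functional calculus
gives `‖(H - (x + i))⁻¹‖ = dist(x + i, σ)⁻¹ = (dist(x, σ)² + 1)^(-1/2)`. Hence continuity of the
resolvent norms makes `ℏ ↦ dist(x, σ(H^ℏ))` continuous for each real `x`, and, the distance being
1-Lipschitz in `x`, jointly continuous in `(ℏ, x)`. Outer continuity then follows from the tube
lemma over the compact `K`, on which the distance is positive at `ℏ₀`; inner continuity from
`dist(x, σ(H^ℏ)) → 0` at a point `x ∈ A ∩ σ(H^ℏ₀)`.
-/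

open Filter Topology Metric Complex
open scoped Ring

section SetFamily

variable {X α : Type*} [TopologicalSpace X]

def OuterContinuous [TopologicalSpace α] (S : X → Set α) : Prop :=
  ∀ ℏ₀ : X, ∀ K : Set α, IsCompact K → K ∩ S ℏ₀ = ∅ → ∃ V ∈ 𝓝 ℏ₀, ∀ ℏ ∈ V, K ∩ S ℏ = ∅

def InnerContinuous [TopologicalSpace α] (S : X → Set α) : Prop :=
  ∀ ℏ₀ : X, ∀ A : Set α, IsOpen A → (A ∩ S ℏ₀).Nonempty →
    ∃ W ∈ 𝓝 ℏ₀, ∀ ℏ ∈ W, (A ∩ S ℏ).Nonempty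

variable [PseudoMetricSpace α] {S : X → Set α}

theorem continuous_infDist_uncurry (h : ∀ x, Continuous fun ℏ => infDist x (S ℏ)) :
    Continuous fun p : X × α => infDist p.2 (S p.1) :=
  continuous_prod_of_continuous_lipschitzWith' _ 1 (fun ℏ => lipschitz_infDist_pt (S ℏ)) h

theorem outerContinuous_of_continuous_infDist (hclosed : ∀ ℏ, IsClosed (S ℏ))
    (hne : ∀ ℏ, (S ℏ).Nonempty) (h : ∀ x, Continuous fun ℏ => infDist x (S ℏ)) :
    OuterContinuous S := by
  intro ℏ₀ K hK hKS
  have hpos : ∀ x ∈ K, ∀ᶠ p : X × α in 𝓝 (ℏ₀, x), 0 < infDist p.2 (S p.1) := by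
    intro x hx
    have hxS : x ∉ S ℏ₀ := fun hxS => Set.eq_empty_iff_forall_notMem.1 hKS x ⟨hx, hxS⟩
    exact (continuous_infDist_uncurry h).continuousAt.eventually
      (lt_mem_nhds (((hclosed ℏ₀).notMem_iff_infDist_pos (hne ℏ₀)).1 hxS))
  obtain ⟨V, hV, hVK⟩ := (hK.eventually_forall_of_forall_eventually
    (P := fun ℏ x => 0 < infDist x (S ℏ)) hpos).exists_mem
  exact ⟨V, hV, fun ℏ hℏ => Set.eq_empty_of_forall_notMem fun x ⟨hxK, hxS⟩ =>
    (hVK ℏ hℏ x hxK).ne' (infDist_zero_of_mem hxS)⟩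

theorem innerContinuous_of_continuous_infDist (hne : ∀ ℏ, (S ℏ).Nonempty)
    (h : ∀ x, Continuous fun ℏ => infDist x (S ℏ)) : InnerContinuous S := by
  rintro ℏ₀ A hA ⟨x, hxA, hxS⟩
  obtain ⟨r, hr, hball⟩ := Metric.isOpen_iff.mp hA x hxA
  have hnear : ∀ᶠ ℏ in 𝓝 ℏ₀, infDist x (S ℏ) < r :=
    (h x).continuousAt.eventually (gt_mem_nhds (by simpa [infDist_zero_of_mem hxS]))
  obtain ⟨W, hW, hWr⟩ := hnear.exists_mem
  refine ⟨W, hW, fun ℏ hℏ => ?_⟩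
  obtain ⟨y, hyS, hxy⟩ := (infDist_lt_iff (hne ℏ)).1 (hWr ℏ hℏ)
  exact ⟨y, hball (mem_ball'.2 hxy), hyS⟩

end SetFamily

theorem Complex.infDist_ofReal_add_I {S : Set ℝ} (hS : IsClosed S) (hne : S.Nonempty) (x : ℝ) :
    infDist ((x : ℂ) + I) (ofReal '' S) = √(infDist x S ^ 2 + 1) := by
  have hdist : ∀ s : ℝ, dist ((x : ℂ) + I) s = √(dist x s ^ 2 + 1) := fun s => by
    simp [dist_eq_re_im, Real.dist_eq, sq_abs]
  apply le_antisymm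
  · obtain ⟨s₀, hs₀, hx⟩ := hS.exists_infDist_eq_dist hne x
    calc _ ≤ dist ((x : ℂ) + I) s₀ := infDist_le_dist_of_mem (Set.mem_image_of_mem _ hs₀)
      _ = _ := by rw [hdist, hx]
  · refine (le_infDist (hne.image _)).2 ?_
    rintro _ ⟨s, hs, rfl⟩
    rw [hdist]
    gcongr
    exacts [infDist_nonneg, infDist_le_dist_of_mem hs]

section Resolvent

variable {A : Type*} [CStarAlgebra A] [Nontrivial A]

theorem IsStarNormal.norm_ringInverse_sub_algebraMap {a : A} [IsStarNormal a] {ζ : ℂ}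
    (hζ : ζ ∉ spectrum ℂ a) :
    ‖(a - algebraMap ℂ A ζ)⁻¹ʳ‖ = (infDist ζ (spectrum ℂ a))⁻¹ := by
  have hne : ∀ z ∈ spectrum ℂ a, z - ζ ≠ 0 := fun z hz =>
    sub_ne_zero.2 (ne_of_mem_of_not_mem hz hζ)
  have hcfc : cfc (fun z => (z - ζ)⁻¹) a = (a - algebraMap ℂ A ζ)⁻¹ʳ := by
    rw [cfc_inv (· - ζ) a hne, cfc_sub (fun z => z) (fun _ => ζ) a, cfc_id' ℂ a, cfc_const ζ a]
  obtain ⟨z₀, hz₀, hdist⟩ := (spectrum.isCompact a).exists_infDist_eq_dist (spectrum.nonempty a) ζ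
  have hpos : 0 < dist ζ z₀ := dist_pos.2 (ne_of_mem_of_not_mem hz₀ hζ).symm
  rw [← hcfc, hdist]
  have hcont : ContinuousOn (fun z => (z - ζ)⁻¹) (spectrum ℂ a) :=
    ContinuousOn.inv₀ (by fun_prop) hne
  refine (IsGreatest.norm_cfc _ a hcont).unique ⟨⟨z₀, hz₀, by simp [dist_eq_norm']⟩, ?_⟩
  rintro _ ⟨z, hz, rfl⟩
  dsimp only
  rw [norm_inv, ← dist_eq_norm, dist_comm]
  exact inv_anti₀ hpos (hdist ▸ infDist_le_dist_of_mem hz)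

theorem IsSelfAdjoint.norm_ringInverse_sub_algebraMap_ofReal_add_I {a : A} (ha : IsSelfAdjoint a)
    (x : ℝ) :
    ‖(a - algebraMap ℂ A (x + I))⁻¹ʳ‖ = (√(infDist x (spectrum ℝ a) ^ 2 + 1))⁻¹ := by
  have hnot : (x + I : ℂ) ∉ spectrum ℂ a := fun h => by
    simpa using congrArg im (ha.mem_spectrum_eq_re h)
  rw [ha.isStarNormal.norm_ringInverse_sub_algebraMap hnot, ← ha.spectrumRestricts.algebraMap_image,
    coe_algebraMap, infDist_ofReal_add_I (spectrum.isClosed a)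
      (ContinuousFunctionalCalculus.spectrum_nonempty a ha)]

theorem continuous_infDist_spectrum {X : Type*} [TopologicalSpace X] {H : X → A}
    (hsa : ∀ ℏ, IsSelfAdjoint (H ℏ))
    (hres : ∀ x : ℝ, Continuous fun ℏ => ‖(H ℏ - algebraMap ℂ A (x + I))⁻¹ʳ‖) (x : ℝ) :
    Continuous fun ℏ => infDist x (spectrum ℝ (H ℏ)) := by
  have hnorm := fun ℏ => (hsa ℏ).norm_ringInverse_sub_algebraMap_ofReal_add_I x
  have hsqrt : (fun ℏ => infDist x (spectrum ℝ (H ℏ)))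
      = fun ℏ => √(‖(H ℏ - algebraMap ℂ A (x + I))⁻¹ʳ‖⁻¹ ^ 2 - 1) := funext fun ℏ => by
    rw [hnorm, inv_inv, Real.sq_sqrt (by positivity), add_sub_cancel_right,
      Real.sqrt_sq infDist_nonneg]
  rw [hsqrt]
  exact ((((hres x).inv₀ fun ℏ => by rw [hnorm]; positivity).pow 2).sub continuous_const).sqrt

end Resolvent

theorem resolvent_norm_continuity_implies_spectra_continuity_general
    {ℋ : Type*} [NormedAddCommGroup ℋ] [InnerProductSpace ℂ ℋ] [CompleteSpace ℋ]
    (a b : ℝ)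
    (H : Set.Icc a b → ℋ →L[ℂ] ℋ)
    (hsa : ∀ ℏ, IsSelfAdjoint (H ℏ))
    (hres : ∀ ζ : ℂ, ζ.im ≠ 0 →
      Continuous fun ℏ : Set.Icc a b =>
        ‖Ring.inverse (H ℏ - ζ • (1 : ℋ →L[ℂ] ℋ))‖) :
    -- outer continuity of the family of spectra
    (∀ ℏ₀ : Set.Icc a b, ∀ K : Set ℝ, IsCompact K →
      K ∩ {x : ℝ | (x : ℂ) ∈ spectrum ℂ (H ℏ₀)} = ∅ →
      ∃ V ∈ 𝓝 ℏ₀, ∀ ℏ ∈ V, K ∩ {x : ℝ | (x : ℂ) ∈ spectrum ℂ (H ℏ)} = ∅) ∧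
    -- inner continuity of the family of spectra
    (∀ ℏ₀ : Set.Icc a b, ∀ A : Set ℝ, IsOpen A →
      (A ∩ {x : ℝ | (x : ℂ) ∈ spectrum ℂ (H ℏ₀)}).Nonempty →
      ∃ W ∈ 𝓝 ℏ₀, ∀ ℏ ∈ W, (A ∩ {x : ℝ | (x : ℂ) ∈ spectrum ℂ (H ℏ)}).Nonempty) := by
  rcases subsingleton_or_nontrivial ℋ with _ | _
  · simp only [spectrum.of_subsingleton, Set.mem_empty_iff_false, Set.ofPred_false,
      Set.inter_empty, Set.not_nonempty_empty]
    exact ⟨fun _ _ _ _ => ⟨_, univ_mem, fun _ _ => trivial⟩, fun _ _ _ => False.elim⟩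
  have hspec (ℏ) : {x : ℝ | (x : ℂ) ∈ spectrum ℂ (H ℏ)} = spectrum ℝ (H ℏ) :=
    spectrum.preimage_algebraMap ℂ
  have hne (ℏ) : (spectrum ℝ (H ℏ)).Nonempty :=
    ContinuousFunctionalCalculus.spectrum_nonempty (H ℏ) (hsa ℏ)
  have hdist := continuous_infDist_spectrum hsa fun x => by
    simpa only [Algebra.algebraMap_eq_smul_one] using hres (x + I) (by simp)
  simp only [hspec]
  exact ⟨outerContinuous_of_continuous_infDist (fun ℏ => spectrum.isClosed _) hne hdist,
    innerContinuous_of_continuous_infDist hne hdist⟩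

/-- If `(H^ℏ)_{ℏ ∈ I}` is a family of bounded self-adjoint operators
on a Hilbert space, indexed by a compact interval `I`, such that for every
non-real `ζ` the map `ℏ ↦ ‖(H^ℏ - ζ)^{-1}‖` is continuous, then the family of
(real) spectra `ℏ ↦ sp(H^ℏ)` is both outer continuous and inner continuous. -/
theorem resolvent_norm_continuity_implies_spectra_continuity
    {ℋ : Type*} [NormedAddCommGroup ℋ] [InnerProductSpace ℂ ℋ] [CompleteSpace ℋ]
    (a b : ℝ) (hab : a ≤ b)
    (H : Set.Icc a b → ℋ →L[ℂ] ℋ)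
    (hsa : ∀ ℏ, IsSelfAdjoint (H ℏ))
    (hres : ∀ ζ : ℂ, ζ.im ≠ 0 →
      Continuous fun ℏ : Set.Icc a b =>
        ‖Ring.inverse (H ℏ - ζ • (1 : ℋ →L[ℂ] ℋ))‖) :
    -- outer continuity of the family of spectra
    (∀ ℏ₀ : Set.Icc a b, ∀ K : Set ℝ, IsCompact K →
      K ∩ {x : ℝ | (x : ℂ) ∈ spectrum ℂ (H ℏ₀)} = ∅ →
      ∃ V ∈ 𝓝 ℏ₀, ∀ ℏ ∈ V, K ∩ {x : ℝ | (x : ℂ) ∈ spectrum ℂ (H ℏ)} = ∅) ∧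
    -- inner continuity of the family of spectra
    (∀ ℏ₀ : Set.Icc a b, ∀ A : Set ℝ, IsOpen A →
      (A ∩ {x : ℝ | (x : ℂ) ∈ spectrum ℂ (H ℏ₀)}).Nonempty →
      ∃ W ∈ 𝓝 ℏ₀, ∀ ℏ ∈ W, (A ∩ {x : ℝ | (x : ℂ) ∈ spectrum ℂ (H ℏ)}).Nonempty) :=
  resolvent_norm_continuity_implies_spectra_continuity_general a b H hsa hres
end
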